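/- Under the hypotheses of the regret bound for FxTS-GF (f differentiable with gradient ∇f, unique minimizer x* with minimum value f*, PL inequality with modulus μ > 0, c1, c2 > 0, p1 > 2, p2 ∈ (1,2), α := p1/(2(p1−1)), p := c1(2μ)^α), if additionally the initial condition satisfies f(x(0)) − f* ≤ 1, then every differentiable solution x : ℝ → ℝ^n of the FxTS-GF dynamics satisfies ∫₀^T (f(x(t)) − f*) dt ≤ 1/(p(2−α)) for every T ≥ 0. -/

import Mathlib

/-!
Along the flow, `V t = f (x t) - f*` satisfies `V' = ⟪∇f, ẋ⟫ ≤ -c1 ‖∇f‖^(2α)`, and the PL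
inequality `‖∇f‖² ≥ 2μ V` turns this into the finite-time decay `V' ≤ -p V^α` with `α < 1`.
For such a `V` the function `∫₀ᵗ V + V(t)^(2-α) / (p (2-α))` is nonincreasing, because the
derivative of its second term is `V^(1-α) V' / p ≤ -V`. Hence the regret up to any `T` is at most
`V(0)^(2-α) / (p (2-α)) ≤ 1 / (p (2-α))`.
-/

open Real Set
open scoped RealInnerProductSpace

noncomputable section

variable {E : Type*} [NormedAddCommGroup E] [InnerProductSpace ℝ E]

theorem HasGradientAt.comp_hasDerivAt [CompleteSpace E] {f : E → ℝ} {g v : E} {γ : ℝ → E}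
    {t : ℝ} (hf : HasGradientAt f g (γ t)) (hγ : HasDerivAt γ v t) :
    HasDerivAt (fun s => f (γ s)) (⟪g, v⟫) t := by
  have h := hf.hasFDerivAt.comp_hasDerivAt t hγ
  rwa [InnerProductSpace.toDual_apply_apply] at h

/-- The right-hand side of the FxTS-GF dynamics, as a function of the gradient `g`. -/
def fxtsField [DecidableEq E] (c1 c2 p1 p2 : ℝ) (g : E) : E :=
  if g = 0 then 0 else
    -(c1 / ‖g‖ ^ ((p1 - 2) / (p1 - 1))) • g - (c2 / ‖g‖ ^ ((p2 - 2) / (p2 - 1))) • g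

theorem inner_fxtsField_le [DecidableEq E] {c1 c2 p1 : ℝ} (p2 : ℝ) (hc2 : 0 ≤ c2) (hp1 : 1 < p1)
    (g : E) :
    ⟪g, fxtsField c1 c2 p1 p2 g⟫ ≤ -c1 * ‖g‖ ^ (p1 / (p1 - 1)) := by
  have hp1' : p1 - 1 ≠ 0 := by linarith
  have hexp : 0 < p1 / (p1 - 1) := div_pos (by linarith) (by linarith)
  by_cases hg : g = 0
  · simp [fxtsField, hg, zero_rpow hexp.ne']
  have hN : 0 < ‖g‖ := norm_pos_iff.mpr hg
  have hdissip : c1 / ‖g‖ ^ ((p1 - 2) / (p1 - 1)) * ‖g‖ ^ 2 = c1 * ‖g‖ ^ (p1 / (p1 - 1)) := by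
    have : p1 / (p1 - 1) = 2 - (p1 - 2) / (p1 - 1) := by field_simp; ring
    rw [this, rpow_sub hN, ← rpow_natCast]
    push_cast
    ring
  have hc2term : 0 ≤ c2 / ‖g‖ ^ ((p2 - 2) / (p2 - 1)) * ‖g‖ ^ 2 := by positivity
  simp only [fxtsField, if_neg hg, inner_sub_right, real_inner_smul_right,
    real_inner_self_eq_norm_sq]
  linarith

theorem inner_fxtsField_le_neg_rpow [DecidableEq E] {c1 c2 p1 μ v : ℝ} (p2 : ℝ) {g : E}
    (hc1 : 0 ≤ c1) (hc2 : 0 ≤ c2) (hp1 : 1 < p1) (hμ : 0 ≤ μ) (hv : 0 ≤ v)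
    (hPL : μ * v ≤ 1 / 2 * ‖g‖ ^ 2) :
    ⟪g, fxtsField c1 c2 p1 p2 g⟫ ≤
      -(c1 * (2 * μ) ^ (p1 / (2 * (p1 - 1)))) * v ^ (p1 / (2 * (p1 - 1))) := by
  set α := p1 / (2 * (p1 - 1))
  have hα : 0 ≤ α := div_nonneg (by linarith) (by linarith)
  have hPL' : (2 * μ) ^ α * v ^ α ≤ ‖g‖ ^ (p1 / (p1 - 1)) := calc
    (2 * μ) ^ α * v ^ α = (2 * μ * v) ^ α := (mul_rpow (by positivity) hv).symm
    _ ≤ (‖g‖ ^ 2) ^ α := rpow_le_rpow (by positivity) (by linarith) hα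
    _ = ‖g‖ ^ (p1 / (p1 - 1)) := by
      have hp1' : p1 - 1 ≠ 0 := by linarith
      rw [← rpow_natCast, ← rpow_mul (norm_nonneg g)]
      congr 1
      simp only [α]
      push_cast
      field_simp
  calc ⟪g, fxtsField c1 c2 p1 p2 g⟫ ≤ -c1 * ‖g‖ ^ (p1 / (p1 - 1)) :=
        inner_fxtsField_le p2 hc2 hp1 g
    _ ≤ -(c1 * (2 * μ) ^ α) * v ^ α := by nlinarith [mul_le_mul_of_nonneg_left hPL' hc1]

end

theorem hasDerivAt_rpow_two_sub_div {V : ℝ → ℝ} {d p α t : ℝ} (hV : HasDerivAt V d t)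
    (hα : α ≤ 1) (hp : 0 < p) :
    HasDerivAt (fun s => V s ^ (2 - α) / (p * (2 - α))) (V t ^ (1 - α) * d / p) t := by
  refine ((hV.rpow_const (p := 2 - α) (Or.inr (by linarith))).div_const _).congr_deriv ?_
  have : (2 - α) ≠ 0 := by linarith
  rw [show 2 - α - 1 = 1 - α by ring]
  field_simp

theorem rpow_one_sub_mul_div_le_neg {v d p α : ℝ} (hv : 0 ≤ v) (hp : 0 < p)
    (hd : d ≤ -p * v ^ α) : v ^ (1 - α) * d / p ≤ -v := by
  have hcollapse : v ^ (1 - α) * v ^ α = v := by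
    rw [← rpow_add' hv (by simp), sub_add_cancel, rpow_one]
  rw [div_le_iff₀ hp]
  calc v ^ (1 - α) * d ≤ v ^ (1 - α) * (-p * v ^ α) :=
        mul_le_mul_of_nonneg_left hd (rpow_nonneg hv _)
    _ = -(v ^ (1 - α) * v ^ α) * p := by ring
    _ = -v * p := by rw [hcollapse]

theorem integral_le_of_hasDerivAt_le_neg_rpow {V V' : ℝ → ℝ} {p α T : ℝ} (hp : 0 < p)
    (hα : α ≤ 1) (hT : 0 ≤ T) (hV : ∀ t ∈ Icc 0 T, HasDerivAt V (V' t) t)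
    (hV_nonneg : ∀ t ∈ Icc 0 T, 0 ≤ V t) (hV' : ∀ t ∈ Icc 0 T, V' t ≤ -p * V t ^ α) :
    ∫ t in (0 : ℝ)..T, V t ≤ V 0 ^ (2 - α) / (p * (2 - α)) := by
  have h2α : 0 < 2 - α := by linarith
  have hcont : ContinuousOn V (Icc 0 T) := fun t ht => (hV t ht).continuousAt.continuousWithinAt
  set Φ : ℝ → ℝ := fun t => (∫ s in (0 : ℝ)..t, V s) + V t ^ (2 - α) / (p * (2 - α))
  have hprim : ∀ t ∈ Ioo 0 T, HasDerivAt (fun u => ∫ s in (0 : ℝ)..u, V s) (V t) t :=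
    fun t ht => intervalIntegral.integral_hasDerivAt_right
      ((hcont.mono (Icc_subset_Icc le_rfl ht.2.le)).intervalIntegrable_of_Icc ht.1.le)
      ((hcont.mono Ioo_subset_Icc_self).stronglyMeasurableAtFilter isOpen_Ioo t ht)
      (hV t (Ioo_subset_Icc_self ht)).continuousAt
  have hanti : AntitoneOn Φ (Icc 0 T) := by
    refine antitoneOn_of_hasDerivWithinAt_nonpos (convex_Icc 0 T)
      (f' := fun t => V t + V t ^ (1 - α) * V' t / p) ?_ ?_ ?_
    · have hprim_cont := intervalIntegral.continuousOn_primitive_interval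
        (hcont.integrableOn_Icc (μ := MeasureTheory.volume) |>.mono_set (uIcc_of_le hT).subset)
      rw [uIcc_of_le hT] at hprim_cont
      exact hprim_cont.add ((hcont.rpow_const fun _ _ => Or.inr (by linarith)).div_const _)
    · rw [interior_Icc]
      intro t ht
      exact ((hprim t ht).add
        (hasDerivAt_rpow_two_sub_div (hV t (Ioo_subset_Icc_self ht)) hα hp)).hasDerivWithinAt
    · rw [interior_Icc]
      intro t ht
      have := rpow_one_sub_mul_div_le_neg (hV_nonneg t (Ioo_subset_Icc_self ht)) hp
        (hV' t (Ioo_subset_Icc_self ht))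
      linarith
  have hT_mem : T ∈ Icc 0 T := right_mem_Icc.mpr hT
  calc ∫ t in (0 : ℝ)..T, V t ≤ Φ T :=
        le_add_of_nonneg_right (div_nonneg (rpow_nonneg (hV_nonneg T hT_mem) _) (by positivity))
    _ ≤ Φ 0 := hanti (left_mem_Icc.mpr hT) hT_mem hT
    _ = V 0 ^ (2 - α) / (p * (2 - α)) := by simp [Φ]

theorem stmt_12_general (n : ℕ) (f : EuclideanSpace ℝ (Fin n) → ℝ)
    (f' : EuclideanSpace ℝ (Fin n) → EuclideanSpace ℝ (Fin n))
    (hgrad : ∀ y, HasGradientAt f (f' y) y)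
    (fstar μ : ℝ) (hμ : 0 < μ)
    (hmin : ∀ y, fstar ≤ f y)
    (hPL : ∀ y, μ * (f y - fstar) ≤ (1 / 2) * ‖f' y‖ ^ 2)
    (c1 c2 p1 p2 : ℝ) (hc1 : 0 < c1) (hc2 : 0 < c2)
    (hp1 : 2 < p1)
    (α p : ℝ) (hα : α = p1 / (2 * (p1 - 1))) (hpdef : p = c1 * (2 * μ) ^ α)
    (x : ℝ → EuclideanSpace ℝ (Fin n))
    (hx : ∀ t, 0 ≤ t → HasDerivAt x
      (if f' (x t) = 0 then 0 else
        -(c1 / ‖f' (x t)‖ ^ ((p1 - 2) / (p1 - 1))) • f' (x t)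
          - (c2 / ‖f' (x t)‖ ^ ((p2 - 2) / (p2 - 1))) • f' (x t)) t)
    (hinit : f (x 0) - fstar ≤ 1) :
    ∀ T : ℝ, 0 ≤ T →
      (∫ t in (0 : ℝ)..T, (f (x t) - fstar)) ≤ 1 / (p * (2 - α)) := by
  intro T hT
  have hα1 : α ≤ 1 := by rw [hα, div_le_one (by linarith)]; linarith
  have hp : 0 < p := by rw [hpdef]; positivity
  have hgap : ∀ t, 0 ≤ f (x t) - fstar := fun t => sub_nonneg.2 (hmin _)
  have hdecay (t : ℝ) :
      ⟪f' (x t), fxtsField c1 c2 p1 p2 (f' (x t))⟫ ≤ -p * (f (x t) - fstar) ^ α := by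
    rw [hpdef, hα]
    exact inner_fxtsField_le_neg_rpow p2 hc1.le hc2.le (by linarith) hμ.le (hgap t) (hPL _)
  calc ∫ t in (0 : ℝ)..T, (f (x t) - fstar)
      ≤ (f (x 0) - fstar) ^ (2 - α) / (p * (2 - α)) :=
        integral_le_of_hasDerivAt_le_neg_rpow hp hα1 hT
          (fun t ht => ((hgrad _).comp_hasDerivAt (hx t ht.1)).sub_const fstar)
          (fun t _ => hgap t) (fun t _ => hdecay t)
    _ ≤ 1 / (p * (2 - α)) := by
      have h2α : 0 < 2 - α := by linarith
      gcongr
      exact rpow_le_one (hgap 0) hinit h2α.le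

/-- Case 2 of Theorem 3: if the initial condition satisfies
`f(x(0)) - f* ≤ 1`, then the static regret of FxTS-GF is bounded by
`l1 = 1/(p(2-α))`, uniformly in `T ≥ 0`. -/
theorem stmt_12 (n : ℕ) (f : EuclideanSpace ℝ (Fin n) → ℝ)
    (f' : EuclideanSpace ℝ (Fin n) → EuclideanSpace ℝ (Fin n))
    (hgrad : ∀ y, HasGradientAt f (f' y) y)
    (xstar : EuclideanSpace ℝ (Fin n)) (fstar μ : ℝ) (hμ : 0 < μ)
    (hfstar : f xstar = fstar) (hmin : ∀ y, fstar ≤ f y)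
    (huniq : ∀ y, f y = fstar → y = xstar)
    (hPL : ∀ y, μ * (f y - fstar) ≤ (1 / 2) * ‖f' y‖ ^ 2)
    (c1 c2 p1 p2 : ℝ) (hc1 : 0 < c1) (hc2 : 0 < c2)
    (hp1 : 2 < p1) (hp2 : p2 ∈ Set.Ioo (1 : ℝ) 2)
    (α p : ℝ) (hα : α = p1 / (2 * (p1 - 1))) (hpdef : p = c1 * (2 * μ) ^ α)
    (x : ℝ → EuclideanSpace ℝ (Fin n))
    (hx : ∀ t, 0 ≤ t → HasDerivAt x
      (if f' (x t) = 0 then 0 else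
        -(c1 / ‖f' (x t)‖ ^ ((p1 - 2) / (p1 - 1))) • f' (x t)
          - (c2 / ‖f' (x t)‖ ^ ((p2 - 2) / (p2 - 1))) • f' (x t)) t)
    (hinit : f (x 0) - fstar ≤ 1) :
    ∀ T : ℝ, 0 ≤ T →
      (∫ t in (0 : ℝ)..T, (f (x t) - fstar)) ≤ 1 / (p * (2 - α)) :=
  stmt_12_general n f f' hgrad fstar μ hμ hmin hPL c1 c2 p1 p2 hc1 hc2 hp1 α p hα hpdef x hx hinit
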